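/- arXiv:1610.05232 — 10 statements merged into one kernel-verified Lean document; each statement's English description precedes it below -/
import Mathlib

section
/- Fix a positive integer n, real numbers α, β and θ > 0. Let λ1, λ2 > 0, and suppose r = α and s = β are such that the CMP normalizing constants Z(λ1, α) = Σ_{k=0}^∞ λ1^k/(k!)^α and Z(λ2, β) = Σ_{k=0}^∞ λ2^k/(k!)^β converge. If p1(x) = λ1^x/((x!)^α Z(λ1,α)) and p2(x) = λ2^x/((x!)^β Z(λ2,β)) are the CMP(α,λ1) and CMP(β,λ2) probability mass functions, then for every x ∈ {0,1,…,n}, the conditional probability p1(x)·p2(n−x) / Σ_{k=0}^n p1(k)·p2(n−k) equals θ^x/((x!)^α ((n−x)!)^β C_n(α,β,θ)) with θ = λ1/λ2, i.e. the conditional distribution of X1 given X1 + X2 = n is MCMPB_n(α, β, λ1/λ2). -/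
/-- Normalizing constant of the MCMPB distribution:
`C_n(α,β,θ) = ∑_{k=0}^n θ^k / ((k!)^α ((n-k)!)^β)`. -/
noncomputable def Cn (n : ℕ) (α β θ : ℝ) : ℝ :=
  ∑ k ∈ Finset.range (n + 1), θ ^ k / ((k.factorial : ℝ) ^ α * ((n - k).factorial : ℝ) ^ β)

/-- Probability mass function of `MCMPB_n(α,β,θ)` at `x`. -/
noncomputable def mcmpb (n : ℕ) (α β θ : ℝ) (x : ℕ) : ℝ :=
  θ ^ x / ((x.factorial : ℝ) ^ α * ((n - x).factorial : ℝ) ^ β * Cn n α β θ)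

/-- If `X₁ ∼ CMP(α,λ₁)` and `X₂ ∼ CMP(β,λ₂)` are independent, the conditional
distribution of `X₁` given `X₁ + X₂ = n` is `MCMPB_n(α,β,λ₁/λ₂)`. -/
theorem conditional_cmp_is_mcmpb (n : ℕ) (hn : 0 < n) (α β : ℝ)
    (lam1 lam2 : ℝ) (hlam1 : 0 < lam1) (hlam2 : 0 < lam2)
    (h1 : Summable fun k : ℕ => lam1 ^ k / (k.factorial : ℝ) ^ α)
    (h2 : Summable fun k : ℕ => lam2 ^ k / (k.factorial : ℝ) ^ β)
    (p1 p2 : ℕ → ℝ)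
    (hp1 : ∀ x : ℕ,
      p1 x = lam1 ^ x / ((x.factorial : ℝ) ^ α * ∑' k : ℕ, lam1 ^ k / (k.factorial : ℝ) ^ α))
    (hp2 : ∀ x : ℕ,
      p2 x = lam2 ^ x / ((x.factorial : ℝ) ^ β * ∑' k : ℕ, lam2 ^ k / (k.factorial : ℝ) ^ β)) :
    ∀ x ≤ n,
      p1 x * p2 (n - x) / (∑ k ∈ Finset.range (n + 1), p1 k * p2 (n - k)) =
        mcmpb n α β (lam1 / lam2) x := by
  intro x hx
  set Z1 := ∑' k : ℕ, lam1 ^ k / (k.factorial : ℝ) ^ α with hZ1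
  set Z2 := ∑' k : ℕ, lam2 ^ k / (k.factorial : ℝ) ^ β with hZ2
  set θ := lam1 / lam2 with hθ
  have hθpos : 0 < θ := div_pos hlam1 hlam2
  have hfacpos : ∀ (m : ℕ) (r : ℝ), (0:ℝ) < (m.factorial : ℝ) ^ r := by
    intro m r
    have : (0:ℝ) < (m.factorial : ℝ) := by exact_mod_cast m.factorial_pos
    positivity
  have hZ1pos : 0 < Z1 := by
    refine Summable.tsum_pos h1 (fun k => ?_) 0 ?_
    · positivity
    · simp
  have hZ2pos : 0 < Z2 := by
    refine Summable.tsum_pos h2 (fun k => ?_) 0 ?_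
    · positivity
    · simp
  have hCpos : 0 < Cn n α β θ := by
    apply Finset.sum_pos
    · intro k _
      have h1 := hfacpos k α
      have h2 := hfacpos (n - k) β
      positivity
    · exact ⟨0, Finset.mem_range.2 (Nat.succ_pos n)⟩
  have key : ∀ k ≤ n, p1 k * p2 (n - k) =
      lam2 ^ n / (Z1 * Z2) * (θ ^ k / ((k.factorial : ℝ) ^ α * ((n - k).factorial : ℝ) ^ β)) := by
    intro k hk
    rw [hp1, hp2]
    have hpow : θ ^ k * lam2 ^ n = lam1 ^ k * lam2 ^ (n - k) := by
      have : lam2 ^ n = lam2 ^ k * lam2 ^ (n - k) := by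
        rw [← pow_add, Nat.add_sub_cancel' hk]
      rw [this, hθ, div_pow, div_mul_eq_mul_div, mul_comm (lam2 ^ k),
        ← mul_assoc, mul_div_assoc, div_self (by positivity), mul_one]
    rw [div_mul_div_comm, ← hpow, div_mul_div_comm]
    ring
  have hsum : (∑ k ∈ Finset.range (n + 1), p1 k * p2 (n - k)) =
      lam2 ^ n / (Z1 * Z2) * Cn n α β θ := by
    rw [Cn, Finset.mul_sum]
    apply Finset.sum_congr rfl
    intro k hk
    exact key k (Nat.lt_succ_iff.mp (Finset.mem_range.mp hk))
  rw [key x hx, hsum, mcmpb]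
  have hc : lam2 ^ n / (Z1 * Z2) ≠ 0 := by positivity
  rw [mul_div_mul_left _ _ hc, div_div]
end

section
/- Fix a positive integer n, real α, β and θ > 0. Let Q : {0,1,…,n} → ℝ be a probability mass function with Q(x) > 0 for all x. Then Q equals the MCMPB_n(α,β,θ) probability mass function if and only if for every function f : {0,1,…,n+1} → ℝ one has Σ_{x=0}^n [θ (n−x)^β f(x+1) − x^α f(x)] Q(x) = 0, i.e. E[θ (n−X)^β f(X+1) − X^α f(X)] = 0 (with the conventions 0^β interpreted as 0 when the coefficient (n−x)^β has n−x = 0 and x^α interpreted as 0 when x = 0). -/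
lemma Cn_pos (n : ℕ) (α β θ : ℝ) (hθ : 0 < θ) : 0 < Cn n α β θ := by
  unfold Cn
  apply Finset.sum_pos
  · intro k hk
    have h1 : (0:ℝ) < (k.factorial : ℝ) := by exact_mod_cast k.factorial_pos
    have h2 : (0:ℝ) < ((n - k).factorial : ℝ) := by exact_mod_cast (n - k).factorial_pos
    positivity
  · exact Finset.nonempty_range_iff.mpr (Nat.succ_ne_zero n)

lemma mcmpb_pos (n : ℕ) (α β θ : ℝ) (hθ : 0 < θ) (x : ℕ) : 0 < mcmpb n α β θ x := by
  unfold mcmpb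
  have h1 : (0:ℝ) < (x.factorial : ℝ) := by exact_mod_cast x.factorial_pos
  have h2 : (0:ℝ) < ((n - x).factorial : ℝ) := by exact_mod_cast (n - x).factorial_pos
  have h3 := Cn_pos n α β θ hθ
  positivity

lemma mcmpb_sum (n : ℕ) (α β θ : ℝ) (hθ : 0 < θ) :
    ∑ x ∈ Finset.range (n + 1), mcmpb n α β θ x = 1 := by
  have hC := Cn_pos n α β θ hθ
  unfold mcmpb
  have : ∀ x ∈ Finset.range (n+1),
      θ ^ x / ((x.factorial : ℝ) ^ α * ((n - x).factorial : ℝ) ^ β * Cn n α β θ)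
      = (θ ^ x / ((x.factorial : ℝ) ^ α * ((n - x).factorial : ℝ) ^ β)) / Cn n α β θ := by
    intro x _; rw [div_div]
  rw [Finset.sum_congr rfl this, ← Finset.sum_div]
  rw [show (∑ x ∈ Finset.range (n+1),
      θ ^ x / ((x.factorial : ℝ) ^ α * ((n - x).factorial : ℝ) ^ β)) = Cn n α β θ from rfl]
  exact div_self hC.ne'

lemma mcmpb_rec (n : ℕ) (α β θ : ℝ) (hθ : 0 < θ) (x : ℕ) (hx : x < n) :
    θ * ((n - x : ℕ) : ℝ) ^ β * mcmpb n α β θ x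
      = ((x + 1 : ℕ) : ℝ) ^ α * mcmpb n α β θ (x + 1) := by
  have hC := Cn_pos n α β θ hθ
  unfold mcmpb
  have hfac1 : ((x+1).factorial : ℝ) = ((x+1 : ℕ) : ℝ) * (x.factorial : ℝ) := by
    rw [Nat.factorial_succ]; push_cast; ring
  have hnx : n - x = (n - (x+1)) + 1 := by omega
  have hfac2 : ((n - x).factorial : ℝ) = ((n - x : ℕ) : ℝ) * ((n - (x+1)).factorial : ℝ) := by
    rw [hnx]
    rw [Nat.factorial_succ]
    push_cast
    have : (n : ℝ) - (x:ℝ) - 1 + 1 = (n:ℝ) - x := by ring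
    rw [show ((n - (x+1) : ℕ) : ℝ) + 1 = ((n - x : ℕ):ℝ) by
      push_cast [Nat.cast_sub (by omega : x + 1 ≤ n), Nat.cast_sub (by omega : x ≤ n)]; ring]
  have hx1pos : (0:ℝ) < ((x+1 : ℕ) : ℝ) := by positivity
  have hnxpos : (0:ℝ) < ((n - x : ℕ) : ℝ) := by
    have : 0 < n - x := by omega
    exact_mod_cast this
  have hxf : (0:ℝ) < (x.factorial : ℝ) := by exact_mod_cast x.factorial_pos
  have hnxf : (0:ℝ) < ((n - (x+1)).factorial : ℝ) := by exact_mod_cast (n - (x+1)).factorial_pos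
  have e1 : ((x+1).factorial : ℝ) ^ α = ((x+1 : ℕ) : ℝ) ^ α * (x.factorial : ℝ) ^ α := by
    rw [hfac1, Real.mul_rpow hx1pos.le hxf.le]
  have e2 : ((n - x).factorial : ℝ) ^ β
      = ((n - x : ℕ) : ℝ) ^ β * ((n - (x+1)).factorial : ℝ) ^ β := by
    rw [hfac2, Real.mul_rpow hnxpos.le hnxf.le]
  rw [e1, e2]
  have p1 : (0:ℝ) < ((x+1:ℕ):ℝ) ^ α := Real.rpow_pos_of_pos hx1pos α
  have p2 : (0:ℝ) < ((n - x:ℕ):ℝ) ^ β := Real.rpow_pos_of_pos hnxpos β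
  have p3 : (0:ℝ) < (x.factorial : ℝ) ^ α := Real.rpow_pos_of_pos hxf α
  have p4 : (0:ℝ) < ((n - (x+1)).factorial : ℝ) ^ β := Real.rpow_pos_of_pos hnxf β
  field_simp
  ring

/-- Theorem 2 (Stein-type characterization): a positive pmf `Q` on `{0,…,n}` is the
`MCMPB_n(α,β,θ)` pmf iff `E[θ (n-X)^β f(X+1) - X^α f(X)] = 0` for every bounded `f`,
with the conventions that the arrival term vanishes at `x = n` and the service term
vanishes at `x = 0`. -/
theorem mcmpb_stein_characterization (n : ℕ) (hn : 0 < n) (α β θ : ℝ) (hθ : 0 < θ)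
    (Q : ℕ → ℝ) (hQpos : ∀ x ≤ n, 0 < Q x)
    (hQsum : ∑ x ∈ Finset.range (n + 1), Q x = 1) :
    (∀ x ≤ n, Q x = mcmpb n α β θ x) ↔
      ∀ f : ℕ → ℝ,
        ∑ x ∈ Finset.range (n + 1),
          ((if x = n then 0 else θ * ((n - x : ℕ) : ℝ) ^ β * f (x + 1)) -
            (if x = 0 then 0 else (x : ℝ) ^ α * f x)) * Q x = 0 := by
  constructor
  · intro hQ f
    have key : ∀ x < n, θ * ((n - x : ℕ) : ℝ) ^ β * Q x = ((x+1 : ℕ) : ℝ) ^ α * Q (x+1) := by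
      intro x hx
      rw [hQ x (le_of_lt hx), hQ (x+1) (by omega)]
      exact mcmpb_rec n α β θ hθ x hx
    have split : ∀ x ∈ Finset.range (n+1),
        ((if x = n then 0 else θ * ((n - x : ℕ) : ℝ) ^ β * f (x + 1)) -
          (if x = 0 then 0 else (x : ℝ) ^ α * f x)) * Q x
        = (if x = n then 0 else θ * ((n - x : ℕ) : ℝ) ^ β * f (x + 1)) * Q x
          - (if x = 0 then 0 else (x : ℝ) ^ α * f x) * Q x := by
      intro x _; ring
    rw [Finset.sum_congr rfl split, Finset.sum_sub_distrib]
    have S1 : ∑ x ∈ Finset.range (n+1),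
        (if x = n then 0 else θ * ((n - x : ℕ) : ℝ) ^ β * f (x + 1)) * Q x
        = ∑ x ∈ Finset.range n, θ * ((n - x : ℕ) : ℝ) ^ β * f (x + 1) * Q x := by
      rw [Finset.sum_range_succ, if_pos rfl, zero_mul, add_zero]
      apply Finset.sum_congr rfl
      intro x hx
      rw [if_neg (by simp at hx; omega)]
    have S2 : ∑ x ∈ Finset.range (n+1),
        (if x = 0 then 0 else (x : ℝ) ^ α * f x) * Q x
        = ∑ x ∈ Finset.range n, ((x+1 : ℕ) : ℝ) ^ α * f (x + 1) * Q (x+1) := by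
      rw [Finset.sum_range_succ', if_pos rfl, zero_mul, add_zero]
      apply Finset.sum_congr rfl
      intro x _
      rw [if_neg (Nat.succ_ne_zero x)]
    rw [S1, S2, sub_eq_zero]
    apply Finset.sum_congr rfl
    intro x hx
    have hx' : x < n := Finset.mem_range.mp hx
    have := key x hx'
    calc θ * ((n - x : ℕ) : ℝ) ^ β * f (x + 1) * Q x
        = (θ * ((n - x : ℕ) : ℝ) ^ β * Q x) * f (x + 1) := by ring
      _ = (((x+1 : ℕ) : ℝ) ^ α * Q (x+1)) * f (x + 1) := by rw [this]
      _ = ((x+1 : ℕ) : ℝ) ^ α * f (x + 1) * Q (x+1) := by ring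
  · intro hf
    -- extract the recurrence for Q
    have key : ∀ x < n, θ * ((n - x : ℕ) : ℝ) ^ β * Q x = ((x+1 : ℕ) : ℝ) ^ α * Q (x+1) := by
      intro x hx
      have h := hf (fun y => if y = x + 1 then 1 else 0)
      have hmem1 : x ∈ Finset.range (n+1) := Finset.mem_range.mpr (by omega)
      have hmem2 : x + 1 ∈ Finset.range (n+1) := Finset.mem_range.mpr (by omega)
      have hterm : ∀ y ∈ Finset.range (n+1),
          ((if y = n then 0 else θ * ((n - y : ℕ) : ℝ) ^ β *
              (if y + 1 = x + 1 then (1:ℝ) else 0)) -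
            (if y = 0 then 0 else (y : ℝ) ^ α * (if y = x + 1 then (1:ℝ) else 0))) * Q y
          = (if y = x then θ * ((n - x : ℕ) : ℝ) ^ β * Q x else 0)
            + (if y = x + 1 then -(((x+1 : ℕ) : ℝ) ^ α * Q (x+1)) else 0) := by
        intro y _
        rcases eq_or_ne y x with rfl | hyx
        · rw [if_pos rfl, if_neg (by omega : ¬ y = y + 1)]
          rw [if_neg (by omega : ¬ y = n), if_pos rfl]
          rcases eq_or_ne y 0 with rfl | hy0
          · simp
          · rw [if_neg hy0, if_neg (by omega : ¬ y = y + 1)]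
            ring
        · rw [if_neg hyx, if_neg (by omega : ¬ y + 1 = x + 1)]
          rcases eq_or_ne y (x+1) with rfl | hyx1
          · rw [if_pos rfl, if_neg (Nat.succ_ne_zero x), if_pos rfl]
            rcases eq_or_ne (x+1) n with he | he
            · rw [if_pos he]; push_cast; ring
            · rw [if_neg he]; push_cast; ring
          · rw [if_neg hyx1, if_neg hyx1]
            rcases eq_or_ne y 0 with rfl | hy0
            · simp
            · rw [if_neg hy0]; simp
      rw [Finset.sum_congr rfl hterm, Finset.sum_add_distrib,
        Finset.sum_ite_eq' _ x, Finset.sum_ite_eq' _ (x+1),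
        if_pos hmem1, if_pos hmem2] at h
      linarith [h]
    -- same recurrence for mcmpb
    have keyM := fun x hx => mcmpb_rec n α β θ hθ x hx
    set m := mcmpb n α β θ with hm
    have hm0 : 0 < m 0 := mcmpb_pos n α β θ hθ 0
    set c : ℝ := Q 0 / m 0 with hc
    have hscale : ∀ x ≤ n, Q x = c * m x := by
      intro x
      induction x with
      | zero => intro _; rw [hc]; field_simp
      | succ k ih =>
        intro hk
        have hk' : k < n := by omega
        have h1 := key k hk'
        have h2 := keyM k hk'
        have hxpow : (0:ℝ) < ((k+1 : ℕ) : ℝ) ^ α :=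
          Real.rpow_pos_of_pos (by positivity) α
        have ihk := ih (by omega)
        have : ((k+1 : ℕ) : ℝ) ^ α * Q (k+1) = ((k+1 : ℕ) : ℝ) ^ α * (c * m (k+1)) := by
          rw [← h1, ihk]
          rw [show θ * ((n - k : ℕ) : ℝ) ^ β * (c * m k)
              = c * (θ * ((n - k : ℕ) : ℝ) ^ β * m k) by ring, h2]
          ring
        exact mul_left_cancel₀ hxpow.ne' this
    have hc1 : c = 1 := by
      have hsum : (1:ℝ) = c := by
        calc (1:ℝ) = ∑ x ∈ Finset.range (n+1), Q x := hQsum.symm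
          _ = ∑ x ∈ Finset.range (n+1), c * m x := by
              apply Finset.sum_congr rfl
              intro x hx
              exact hscale x (Nat.lt_succ_iff.mp (Finset.mem_range.mp hx))
          _ = c * ∑ x ∈ Finset.range (n+1), m x := by rw [Finset.mul_sum]
          _ = c := by rw [hm, mcmpb_sum n α β θ hθ]; ring
      linarith
    intro x hx
    rw [hscale x hx, hc1, one_mul]
end

section
/- Let P be the probability mass function of MCMPB_n(α,β,θ) with n a positive integer, α, β real and θ > 0. Then for every x ∈ {1,…,n−1}, P(x+1)·P(x−1)/P(x)^2 = (x/(x+1))^α · ((n−x)/(n−x+1))^β. Consequently, if α > 0 and β > 0 then P is strictly log-concave on {0,…,n} (P(x)^2 > P(x+1)P(x−1) for 1 ≤ x ≤ n−1). -/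
/-- For `1 ≤ x ≤ n-1`,
`P(x+1)P(x-1)/P(x)² = (x/(x+1))^α ((n-x)/(n-x+1))^β`; consequently, if
`α > 0` and `β > 0` the MCMPB pmf is strictly log-concave. -/
theorem mcmpb_ratio_and_log_concave (n : ℕ) (hn : 0 < n) (α β θ : ℝ) (hθ : 0 < θ) :
    (∀ x : ℕ, 1 ≤ x → x ≤ n - 1 →
      mcmpb n α β θ (x + 1) * mcmpb n α β θ (x - 1) / (mcmpb n α β θ x) ^ 2 =
        ((x : ℝ) / ((x : ℝ) + 1)) ^ α *
          (((n - x : ℕ) : ℝ) / (((n - x : ℕ) : ℝ) + 1)) ^ β) ∧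
    (0 < α → 0 < β → ∀ x : ℕ, 1 ≤ x → x ≤ n - 1 →
      mcmpb n α β θ (x + 1) * mcmpb n α β θ (x - 1) < (mcmpb n α β θ x) ^ 2) := by
  have hC := Cn_pos n α β θ hθ
  have hratio : ∀ x : ℕ, 1 ≤ x → x ≤ n - 1 →
      mcmpb n α β θ (x + 1) * mcmpb n α β θ (x - 1) / (mcmpb n α β θ x) ^ 2 =
        ((x : ℝ) / ((x : ℝ) + 1)) ^ α *
          (((n - x : ℕ) : ℝ) / (((n - x : ℕ) : ℝ) + 1)) ^ β := by
    intro x hx1 hx2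
    obtain ⟨y, rfl⟩ : ∃ y, x = y + 1 := ⟨x - 1, by omega⟩
    obtain ⟨k, hk⟩ : ∃ k, n - (y + 1) = k + 1 := ⟨n - (y + 1) - 1, by omega⟩
    have e1 : n - (y + 1 + 1) = k := by omega
    have e3 : y + 1 - 1 = y := by omega
    have e2 : n - y = k + 2 := by omega
    unfold mcmpb
    rw [e3, e1, e2, hk, show y + 1 + 1 = y + 2 from rfl]
    -- factorial expansions under rpow
    have hfy : (0:ℝ) ≤ y.factorial := by positivity
    have hfy1 : (0:ℝ) ≤ (y+1).factorial := by positivity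
    have hfk : (0:ℝ) ≤ k.factorial := by positivity
    have hfk1 : (0:ℝ) ≤ (k+1).factorial := by positivity
    have A2 : (((y+2).factorial : ℝ)) ^ α = ((y:ℝ)+2) ^ α * ((y+1).factorial : ℝ) ^ α := by
      rw [show (y+2).factorial = (y+2) * (y+1).factorial from Nat.factorial_succ (y+1)]
      push_cast
      rw [Real.mul_rpow (by positivity) hfy1]
    have A1 : (((y+1).factorial : ℝ)) ^ α = ((y:ℝ)+1) ^ α * (y.factorial : ℝ) ^ α := by
      rw [show (y+1).factorial = (y+1) * y.factorial from Nat.factorial_succ y]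
      push_cast
      rw [Real.mul_rpow (by positivity) hfy]
    have B2 : (((k+2).factorial : ℝ)) ^ β = ((k:ℝ)+2) ^ β * ((k+1).factorial : ℝ) ^ β := by
      rw [show (k+2).factorial = (k+2) * (k+1).factorial from Nat.factorial_succ (k+1)]
      push_cast
      rw [Real.mul_rpow (by positivity) hfk1]
    have B1 : (((k+1).factorial : ℝ)) ^ β = ((k:ℝ)+1) ^ β * (k.factorial : ℝ) ^ β := by
      rw [show (k+1).factorial = (k+1) * k.factorial from Nat.factorial_succ k]
      push_cast
      rw [Real.mul_rpow (by positivity) hfk]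
    have RHS1 : (((y:ℝ)+1) / (((y:ℝ)+1) + 1)) ^ α = ((y:ℝ)+1) ^ α / ((y:ℝ)+2) ^ α := by
      rw [Real.div_rpow (by positivity) (by positivity),
        show ((y:ℝ)+1+1) = ((y:ℝ)+2) by ring]
    have RHS2 : (((k:ℝ)+1) / (((k:ℝ)+1) + 1)) ^ β = ((k:ℝ)+1) ^ β / ((k:ℝ)+2) ^ β := by
      rw [Real.div_rpow (by positivity) (by positivity),
        show ((k:ℝ)+1+1) = ((k:ℝ)+2) by ring]
    push_cast
    rw [show ((y:ℝ) + 1 + 1) = ((y:ℝ) + 2) by ring, show ((k:ℝ) + 1 + 1) = ((k:ℝ) + 2) by ring] at *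
    rw [A2, A1, B2, B1, RHS1, RHS2]
    have p1 : (0:ℝ) < ((y:ℝ)+1) ^ α := Real.rpow_pos_of_pos (by positivity) _
    have p2 : (0:ℝ) < ((y:ℝ)+2) ^ α := Real.rpow_pos_of_pos (by positivity) _
    have p3 : (0:ℝ) < (y.factorial : ℝ) ^ α := Real.rpow_pos_of_pos (by positivity) _
    have p4 : (0:ℝ) < ((k:ℝ)+1) ^ β := Real.rpow_pos_of_pos (by positivity) _
    have p5 : (0:ℝ) < ((k:ℝ)+2) ^ β := Real.rpow_pos_of_pos (by positivity) _
    have p6 : (0:ℝ) < (k.factorial : ℝ) ^ β := Real.rpow_pos_of_pos (by positivity) _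
    have hθ' : θ ≠ 0 := ne_of_gt hθ
    field_simp
    ring
  refine ⟨hratio, ?_⟩
  intro hα hβ x hx1 hx2
  have h := hratio x hx1 hx2
  have hPx := mcmpb_pos n α β θ hθ x
  have hx0 : (0:ℝ) < (x:ℝ) := by exact_mod_cast hx1
  have hnx : 1 ≤ n - x := by omega
  have hk0 : (0:ℝ) < ((n - x : ℕ) : ℝ) := by exact_mod_cast hnx
  have r1lt : ((x:ℝ) / ((x:ℝ) + 1)) ^ α < 1 :=
    Real.rpow_lt_one (by positivity) (by rw [div_lt_one (by linarith)]; linarith) hα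
  have r2lt : (((n - x : ℕ) : ℝ) / (((n - x : ℕ) : ℝ) + 1)) ^ β < 1 :=
    Real.rpow_lt_one (by positivity) (by rw [div_lt_one (by linarith)]; linarith) hβ
  have r1pos : 0 < ((x:ℝ) / ((x:ℝ) + 1)) ^ α := Real.rpow_pos_of_pos (by positivity) _
  have r2pos : 0 < (((n - x : ℕ) : ℝ) / (((n - x : ℕ) : ℝ) + 1)) ^ β :=
    Real.rpow_pos_of_pos (by positivity) _
  have hlt1 : mcmpb n α β θ (x + 1) * mcmpb n α β θ (x - 1) / (mcmpb n α β θ x) ^ 2 < 1 := by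
    rw [h]
    calc ((x:ℝ) / ((x:ℝ) + 1)) ^ α * (((n - x : ℕ) : ℝ) / (((n - x : ℕ) : ℝ) + 1)) ^ β
        < 1 * 1 := mul_lt_mul r1lt (le_of_lt r2lt) r2pos (by norm_num)
      _ = 1 := by ring
  have hsq : (0:ℝ) < (mcmpb n α β θ x) ^ 2 := by positivity
  exact (div_lt_one hsq).mp hlt1
end

section
/- Let P be the probability mass function of MCMPB_n(α,β,θ) with n a positive integer, α < 0, β < 0 real and θ > 0. Then P is strictly log-convex on {0,…,n}: for every x ∈ {1,…,n−1}, P(x)^2 < P(x+1)·P(x−1). -/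
lemma fact_sq_lt (y : ℕ) : ((y+1).factorial)^2 < (y+2).factorial * y.factorial := by
  have h1 : (y+1).factorial = (y+1) * y.factorial := rfl
  have h2 : (y+2).factorial = (y+2) * ((y+1) * y.factorial) := rfl
  have := y.factorial_pos
  nlinarith [Nat.factorial_pos y]

lemma key_rpow (y : ℕ) (α : ℝ) (hα : α < 0) :
    ((y+2).factorial : ℝ) ^ α * ((y).factorial : ℝ) ^ α
      < (((y+1).factorial : ℝ) ^ α) ^ 2 := by
  have h0 : (0:ℝ) < ((y+1).factorial : ℝ) ^ 2 := by positivity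
  have hlt : (((y+1).factorial : ℝ)) ^ 2 < ((y+2).factorial : ℝ) * ((y).factorial : ℝ) := by
    have := fact_sq_lt y
    exact_mod_cast this
  have := Real.rpow_lt_rpow_of_neg h0 hlt hα
  calc ((y+2).factorial : ℝ) ^ α * ((y).factorial : ℝ) ^ α
      = (((y+2).factorial : ℝ) * ((y).factorial : ℝ)) ^ α := by
        rw [Real.mul_rpow (by positivity) (by positivity)]
    _ < (((y+1).factorial : ℝ) ^ 2) ^ α := this
    _ = (((y+1).factorial : ℝ) ^ α) ^ 2 := by
        rw [← Real.rpow_natCast (((y+1).factorial : ℝ)) 2,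
          ← Real.rpow_natCast (((y+1).factorial : ℝ) ^ α) 2,
          ← Real.rpow_mul (by positivity), ← Real.rpow_mul (by positivity)]
        ring_nf

/-- If `α < 0` and `β < 0`, the `MCMPB_n(α,β,θ)` pmf is strictly log-convex on
`{0,…,n}`: `P(x)² < P(x+1)P(x-1)` for every `1 ≤ x ≤ n-1`. -/
theorem mcmpb_log_convex (n : ℕ) (hn : 0 < n) (α β θ : ℝ)
    (hα : α < 0) (hβ : β < 0) (hθ : 0 < θ) :
    ∀ x : ℕ, 1 ≤ x → x ≤ n - 1 →
      (mcmpb n α β θ x) ^ 2 < mcmpb n α β θ (x + 1) * mcmpb n α β θ (x - 1) := by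
  intro x hx1 hx2
  obtain ⟨y, rfl⟩ : ∃ y, x = y + 1 := ⟨x - 1, by omega⟩
  obtain ⟨m, rfl⟩ : ∃ m, n = y + m + 2 := ⟨n - y - 2, by omega⟩
  have hC : 0 < Cn (y + m + 2) α β θ := by
    apply Finset.sum_pos
    · intro k hk
      have := k.factorial_pos
      have := (y + m + 2 - k).factorial_pos
      positivity
    · exact ⟨0, by simp⟩
  set C := Cn (y + m + 2) α β θ
  have e1 : y + 1 - 1 = y := by omega
  have e2 : y + m + 2 - (y + 1) = m + 1 := by omega
  have e3 : y + m + 2 - (y + 1 + 1) = m := by omega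
  have e4 : y + m + 2 - y = m + 2 := by omega
  simp only [mcmpb, e1, e2, e3, e4]
  set A := ((y+1).factorial : ℝ) ^ α with hA
  set B := ((m+1).factorial : ℝ) ^ β with hB
  set P := ((y+1+1).factorial : ℝ) ^ α with hP
  set R := ((y).factorial : ℝ) ^ α with hR
  set Q := ((m).factorial : ℝ) ^ β with hQ
  set S := ((m+2).factorial : ℝ) ^ β with hS
  have hApos : 0 < A := Real.rpow_pos_of_pos (by exact_mod_cast (y+1).factorial_pos) _
  have hBpos : 0 < B := Real.rpow_pos_of_pos (by exact_mod_cast (m+1).factorial_pos) _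
  have hPpos : 0 < P := Real.rpow_pos_of_pos (by exact_mod_cast (y+2).factorial_pos) _
  have hRpos : 0 < R := Real.rpow_pos_of_pos (by exact_mod_cast (y).factorial_pos) _
  have hQpos : 0 < Q := Real.rpow_pos_of_pos (by exact_mod_cast (m).factorial_pos) _
  have hSpos : 0 < S := Real.rpow_pos_of_pos (by exact_mod_cast (m+2).factorial_pos) _
  have hkey1 : P * R < A ^ 2 := by
    have := key_rpow y α hα
    simpa [hA, hP, hR] using this
  have hkey2 : S * Q < B ^ 2 := by
    have := key_rpow m β hβ
    have h' : ((m+2).factorial : ℝ) ^ β * ((m).factorial : ℝ) ^ β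
        < (((m+1).factorial : ℝ) ^ β) ^ 2 := this
    simpa [hB, hS, hQ] using h'
  have hkey : P * R * (S * Q) < A ^ 2 * B ^ 2 :=
    mul_lt_mul'' hkey1 hkey2 (by positivity) (by positivity)
  have lhs_eq : (θ ^ (y+1) / (A * B * C)) ^ 2
      = θ ^ (2*y+2) / (A ^ 2 * B ^ 2 * C ^ 2) := by
    rw [div_pow, ← pow_mul]
    ring_nf
  have rhs_eq : θ ^ (y+1+1) / (P * Q * C) * (θ ^ y / (R * S * C))
      = θ ^ (2*y+2) / (P * R * (S * Q) * C ^ 2) := by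
    rw [div_mul_div_comm, ← pow_add]
    ring_nf
  rw [lhs_eq, rhs_eq]
  apply div_lt_div_of_pos_left (by positivity) (by positivity)
  have : (0:ℝ) < C ^ 2 := by positivity
  exact mul_lt_mul_of_pos_right hkey this
end

section
/- Let P be the probability mass function of MCMPB_n(α,β,θ) with n ≥ 2 an integer, α < 0, β < 0 and θ > 0. (i) If θ < n^α then P is strictly decreasing on {0,…,n}, so the unique mode is at x = 0. (ii) If θ > n^{−β} then P is strictly increasing on {0,…,n}, so the unique mode is at x = n. (iii) If n^α < θ < n^{−β} then P(0) > P(1), P(n) > P(n−1), and for every x with 0 < x < n one has P(x) < max(P(0), P(n)), so the distribution is bimodal with modes at x = 0 and x = n. -/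
lemma mcmpb_succ (n x : ℕ) (α β θ : ℝ) (hθ : 0 < θ) (hx : x < n) :
    mcmpb n α β θ (x+1) =
      mcmpb n α β θ x * (θ * (((n - x : ℕ)) : ℝ) ^ β / (((x+1 : ℕ)) : ℝ) ^ α) := by
  have hC := Cn_pos n α β θ hθ
  obtain ⟨m, hm⟩ : ∃ m, n - x = m + 1 := ⟨n - x - 1, by omega⟩
  have hm1 : n - (x + 1) = m := by omega
  unfold mcmpb
  rw [hm, hm1]
  have f1 : (((x+1).factorial : ℕ) : ℝ) = ((x:ℝ)+1) * (x.factorial : ℝ) := by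
    push_cast [Nat.factorial_succ]; ring
  have f2 : (((m+1).factorial : ℕ) : ℝ) = ((m:ℝ)+1) * (m.factorial : ℝ) := by
    push_cast [Nat.factorial_succ]; ring
  have hx1 : (0:ℝ) < (x:ℝ)+1 := by positivity
  have hm1' : (0:ℝ) < (m:ℝ)+1 := by positivity
  rw [f1, f2, Real.mul_rpow hx1.le (by positivity), Real.mul_rpow hm1'.le (by positivity)]
  have hxf : (0:ℝ) < (x.factorial : ℝ) := by exact_mod_cast x.factorial_pos
  have hmf : (0:ℝ) < (m.factorial : ℝ) := by exact_mod_cast m.factorial_pos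
  have p1 : ((x:ℝ)+1)^α ≠ 0 := ne_of_gt (Real.rpow_pos_of_pos hx1 α)
  have p2 : ((m:ℝ)+1)^β ≠ 0 := ne_of_gt (Real.rpow_pos_of_pos hm1' β)
  have p3 : ((x.factorial:ℝ))^α ≠ 0 := ne_of_gt (Real.rpow_pos_of_pos hxf α)
  have p4 : ((m.factorial:ℝ))^β ≠ 0 := ne_of_gt (Real.rpow_pos_of_pos hmf β)
  have p5 : Cn n α β θ ≠ 0 := ne_of_gt hC
  push_cast
  field_simp
  ring

lemma step_dec_iff (n x : ℕ) (α β θ : ℝ) (hθ : 0 < θ) (hx : x < n) :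
    mcmpb n α β θ (x+1) < mcmpb n α β θ x ↔
      θ * (((n - x : ℕ)) : ℝ) ^ β < (((x+1 : ℕ)) : ℝ) ^ α := by
  rw [mcmpb_succ n x α β θ hθ hx]
  have h0 := mcmpb_pos n α β θ hθ x
  have hb : (0:ℝ) < ((x+1 : ℕ) : ℝ) := by exact_mod_cast Nat.succ_pos x
  have hA : (0:ℝ) < (((x+1 : ℕ)) : ℝ) ^ α := Real.rpow_pos_of_pos hb α
  rw [mul_lt_iff_lt_one_right h0, div_lt_one hA]

lemma step_inc_iff (n x : ℕ) (α β θ : ℝ) (hθ : 0 < θ) (hx : x < n) :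
    mcmpb n α β θ x < mcmpb n α β θ (x+1) ↔
      (((x+1 : ℕ)) : ℝ) ^ α < θ * (((n - x : ℕ)) : ℝ) ^ β := by
  rw [mcmpb_succ n x α β θ hθ hx]
  have h0 := mcmpb_pos n α β θ hθ x
  have hb : (0:ℝ) < ((x+1 : ℕ) : ℝ) := by exact_mod_cast Nat.succ_pos x
  have hA : (0:ℝ) < (((x+1 : ℕ)) : ℝ) ^ α := Real.rpow_pos_of_pos hb α
  rw [lt_mul_iff_one_lt_right h0, lt_div_iff₀ hA, one_mul]

lemma chain_lt (f : ℕ → ℝ) : ∀ b a, a < b → (∀ j, a ≤ j → j < b → f (j+1) < f j) → f b < f a := by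
  intro b
  induction b with
  | zero => intro a h; omega
  | succ b ih =>
    intro a hab hstep
    rcases Nat.lt_or_ge a b with h | h
    · exact lt_trans (hstep b (by omega) (by omega))
        (ih a h (fun j hj1 hj2 => hstep j hj1 (by omega)))
    · have : a = b := by omega
      subst this
      exact hstep a le_rfl (by omega)

lemma chain_gt (f : ℕ → ℝ) (a b : ℕ) (hab : a < b)
    (h : ∀ j, a ≤ j → j < b → f j < f (j+1)) : f a < f b := by
  have := chain_lt (fun j => -f j) b a hab (fun j h1 h2 => by
    simpa using neg_lt_neg (h j h1 h2))
  simpa using this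

/-- strict antitonicity of the threshold function `g j = (j+1)^α / (n-j)^β`. -/
lemma g_anti (n : ℕ) (α β : ℝ) (hα : α < 0) (hβ : β < 0) {j k : ℕ} (hjk : j < k) (hk : k < n) :
    (((k+1:ℕ)):ℝ)^α / (((n-k:ℕ)):ℝ)^β < (((j+1:ℕ)):ℝ)^α / (((n-j:ℕ)):ℝ)^β := by
  have hj1 : (0:ℝ) < ((j+1:ℕ):ℝ) := by exact_mod_cast Nat.succ_pos j
  have hk1 : (0:ℝ) < ((k+1:ℕ):ℝ) := by exact_mod_cast Nat.succ_pos k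
  have hnk : (0:ℝ) < ((n-k:ℕ):ℝ) := by
    have : 0 < n - k := by omega
    exact_mod_cast this
  have hnj : (0:ℝ) < ((n-j:ℕ):ℝ) := by
    have : 0 < n - j := by omega
    exact_mod_cast this
  have hBk : (0:ℝ) < ((n-k:ℕ):ℝ)^β := Real.rpow_pos_of_pos hnk β
  have hBj : (0:ℝ) < ((n-j:ℕ):ℝ)^β := Real.rpow_pos_of_pos hnj β
  rw [div_lt_div_iff₀ hBk hBj]
  have hA : (((k+1:ℕ)):ℝ)^α < (((j+1:ℕ)):ℝ)^α := by
    apply Real.rpow_lt_rpow_of_neg hj1 _ hα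
    exact_mod_cast Nat.succ_lt_succ hjk
  have hB : (((n-j:ℕ)):ℝ)^β ≤ (((n-k:ℕ)):ℝ)^β := by
    apply Real.rpow_le_rpow_of_nonpos hnk _ hβ.le
    exact_mod_cast Nat.sub_le_sub_left hjk.le n
  exact mul_lt_mul hA hB hBj (Real.rpow_pos_of_pos hj1 α).le

/-- Modality of `MCMPB_n(α,β,θ)` for `α < 0`, `β < 0`:
(i) if `θ < n^α` the pmf is strictly decreasing (unique mode at `0`);
(ii) if `θ > n^{-β}` it is strictly increasing (unique mode at `n`);
(iii) if `n^α < θ < n^{-β}` then `P(0) > P(1)`, `P(n) > P(n-1)` and every interior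
value is below `max(P(0), P(n))`, so the distribution is bimodal with modes `0` and `n`. -/
theorem mcmpb_modality_neg_params (n : ℕ) (hn : 2 ≤ n) (α β θ : ℝ)
    (hα : α < 0) (hβ : β < 0) (hθ : 0 < θ) :
    (θ < (n : ℝ) ^ α → ∀ x < n, mcmpb n α β θ (x + 1) < mcmpb n α β θ x) ∧
    ((n : ℝ) ^ (-β) < θ → ∀ x < n, mcmpb n α β θ x < mcmpb n α β θ (x + 1)) ∧
    ((n : ℝ) ^ α < θ → θ < (n : ℝ) ^ (-β) →
      mcmpb n α β θ 1 < mcmpb n α β θ 0 ∧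
      mcmpb n α β θ (n - 1) < mcmpb n α β θ n ∧
      ∀ x : ℕ, 0 < x → x < n →
        mcmpb n α β θ x < max (mcmpb n α β θ 0) (mcmpb n α β θ n)) := by
  have hn0 : (0:ℝ) < (n:ℝ) := by exact_mod_cast (by omega : 0 < n)
  have hnβ : (0:ℝ) < (n:ℝ)^β := Real.rpow_pos_of_pos hn0 β
  have hone : (n:ℝ)^(-β) * (n:ℝ)^β = 1 := by
    rw [← Real.rpow_add hn0]; simp
  refine ⟨?_, ?_, ?_⟩
  · -- (i) strictly decreasing
    intro hlt x hx
    rw [step_dec_iff n x α β θ hθ hx]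
    have hnx : (0:ℝ) < ((n-x:ℕ):ℝ) := by exact_mod_cast (by omega : 0 < n - x)
    have hB1 : ((n-x:ℕ):ℝ)^β ≤ 1 := by
      apply Real.rpow_le_one_of_one_le_of_nonpos _ hβ.le
      exact_mod_cast (by omega : 1 ≤ n - x)
    calc θ * ((n-x:ℕ):ℝ)^β ≤ θ * 1 := by
          exact mul_le_mul_of_nonneg_left hB1 hθ.le
      _ = θ := mul_one θ
      _ < (n:ℝ)^α := hlt
      _ ≤ ((x+1:ℕ):ℝ)^α := by
          apply Real.rpow_le_rpow_of_nonpos _ _ hα.le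
          · exact_mod_cast Nat.succ_pos x
          · exact_mod_cast (by omega : x + 1 ≤ n)
  · -- (ii) strictly increasing
    intro hlt x hx
    rw [step_inc_iff n x α β θ hθ hx]
    have hx1 : (0:ℝ) < ((x+1:ℕ):ℝ) := by exact_mod_cast Nat.succ_pos x
    have hnx : (0:ℝ) < ((n-x:ℕ):ℝ) := by exact_mod_cast (by omega : 0 < n - x)
    calc ((x+1:ℕ):ℝ)^α ≤ 1 := by
          apply Real.rpow_le_one_of_one_le_of_nonpos _ hα.le
          exact_mod_cast Nat.succ_le_succ (Nat.zero_le x)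
      _ = (n:ℝ)^(-β) * (n:ℝ)^β := hone.symm
      _ < θ * (n:ℝ)^β := mul_lt_mul_of_pos_right hlt hnβ
      _ ≤ θ * ((n-x:ℕ):ℝ)^β := by
          apply mul_le_mul_of_nonneg_left _ hθ.le
          apply Real.rpow_le_rpow_of_nonpos hnx _ hβ.le
          exact_mod_cast Nat.sub_le n x
  · -- (iii) bimodal
    intro h1 h2
    refine ⟨?_, ?_, ?_⟩
    · -- P(1) < P(0)
      have h := (step_dec_iff n 0 α β θ hθ (by omega)).mpr ?_
      · simpa using h
      · have : ((0+1:ℕ):ℝ)^α = 1 := by norm_num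
        rw [this]
        have : θ * ((n-0:ℕ):ℝ)^β < (n:ℝ)^(-β) * (n:ℝ)^β := by
          simp only [Nat.sub_zero]
          exact mul_lt_mul_of_pos_right h2 hnβ
        calc θ * ((n-0:ℕ):ℝ)^β < (n:ℝ)^(-β) * (n:ℝ)^β := this
          _ = 1 := hone
    · -- P(n-1) < P(n)
      have h := (step_inc_iff n (n-1) α β θ hθ (by omega)).mpr ?_
      · have e : n - 1 + 1 = n := by omega
        rwa [e] at h
      · have e1 : n - 1 + 1 = n := by omega
        have e2 : n - (n-1) = 1 := by omega
        rw [e1, e2]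
        have : ((1:ℕ):ℝ)^β = 1 := by norm_num
        rw [this, mul_one]
        exact h1
    · -- interior
      intro x hx0 hxn
      have hnx : (0:ℝ) < ((n-x:ℕ):ℝ) := by exact_mod_cast (by omega : 0 < n - x)
      have hBx : (0:ℝ) < ((n-x:ℕ):ℝ)^β := Real.rpow_pos_of_pos hnx β
      rcases le_or_gt θ (((x+1:ℕ):ℝ)^α / ((n-x:ℕ):ℝ)^β) with hle | hgt
      · -- P(x) < P(0)
        apply lt_max_of_lt_left
        apply chain_lt (mcmpb n α β θ) x 0 hx0
        intro j _ hj
        rw [step_dec_iff n j α β θ hθ (by omega)]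
        have hnj : (0:ℝ) < ((n-j:ℕ):ℝ) := by exact_mod_cast (by omega : 0 < n - j)
        have hBj : (0:ℝ) < ((n-j:ℕ):ℝ)^β := Real.rpow_pos_of_pos hnj β
        rw [← lt_div_iff₀ hBj]
        exact lt_of_le_of_lt hle (g_anti n α β hα hβ hj hxn)
      · -- P(x) < P(n)
        apply lt_max_of_lt_right
        apply chain_gt (mcmpb n α β θ) x n hxn
        intro j hj hjn
        rw [step_inc_iff n j α β θ hθ hjn]
        have hnj : (0:ℝ) < ((n-j:ℕ):ℝ) := by exact_mod_cast (by omega : 0 < n - j)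
        have hBj : (0:ℝ) < ((n-j:ℕ):ℝ)^β := Real.rpow_pos_of_pos hnj β
        rw [← div_lt_iff₀ hBj]
        rcases Nat.eq_or_lt_of_le hj with heq | hlt'
        · subst heq; exact hgt
        · exact lt_trans (g_anti n α β hα hβ hlt' hjn) hgt
end

section
/- Let P be the probability mass function of MCMPB_n(α,β,θ) with n a positive integer, α > 0, β > 0 and θ > 0. Then P is unimodal: there exists m ∈ {0,…,n} such that P(x) ≤ P(x+1) for all x < m and P(x) ≥ P(x+1) for all x ≥ m. Equivalently, the successive ratio P(x+1)/P(x) = θ(n−x)^β/(x+1)^α is strictly decreasing in x on {0,…,n−1}. -/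
lemma mcmpb_step (n : ℕ) (α β θ : ℝ) (hθ : 0 < θ) (x : ℕ) (hx : x < n) :
    mcmpb n α β θ (x + 1) * ((x : ℝ) + 1) ^ α
      = mcmpb n α β θ x * (θ * ((n - x : ℕ) : ℝ) ^ β) := by
  have hk : n - x = (n - (x + 1)) + 1 := by omega
  unfold mcmpb
  rw [hk]
  set k := n - (x + 1) with hkdef
  rw [Nat.factorial_succ x, Nat.factorial_succ k]
  push_cast
  rw [Real.mul_rpow (by positivity) (by positivity),
      Real.mul_rpow (by positivity) (by positivity)]
  have hC : Cn n α β θ ≠ 0 := ne_of_gt (Cn_pos n α β θ hθ)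
  have hxf : ((x.factorial : ℝ)) ^ α ≠ 0 := by
    have : (0:ℝ) < (x.factorial : ℝ) := by exact_mod_cast x.factorial_pos
    positivity
  have hkf : ((k.factorial : ℝ)) ^ β ≠ 0 := by
    have : (0:ℝ) < (k.factorial : ℝ) := by exact_mod_cast k.factorial_pos
    positivity
  have hx1 : ((x : ℝ) + 1) ^ α ≠ 0 := by positivity
  have hk1 : ((k : ℝ) + 1) ^ β ≠ 0 := by positivity
  field_simp
  ring

lemma ratio_strict (n : ℕ) (α β θ : ℝ) (hα : 0 < α) (hβ : 0 < β) (hθ : 0 < θ)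
    (x : ℕ) (h : x + 1 < n) :
    θ * ((n - (x + 1) : ℕ) : ℝ) ^ β / (((x : ℝ) + 1) + 1) ^ α <
      θ * ((n - x : ℕ) : ℝ) ^ β / ((x : ℝ) + 1) ^ α := by
  have h1 : ((n - (x + 1) : ℕ) : ℝ) < ((n - x : ℕ) : ℝ) := by
    exact_mod_cast (by omega : n - (x + 1) < n - x)
  have h0 : (0:ℝ) ≤ ((n - (x + 1) : ℕ) : ℝ) := by positivity
  have hnum : ((n - (x + 1) : ℕ) : ℝ) ^ β < ((n - x : ℕ) : ℝ) ^ β :=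
    Real.rpow_lt_rpow h0 h1 hβ
  have hden : ((x : ℝ) + 1) ^ α < (((x : ℝ) + 1) + 1) ^ α :=
    Real.rpow_lt_rpow (by positivity) (by linarith) hα
  have hd1 : (0:ℝ) < ((x : ℝ) + 1) ^ α := by positivity
  have hd2 : (0:ℝ) < (((x : ℝ) + 1) + 1) ^ α := by positivity
  apply div_lt_div₀ (by nlinarith) (le_of_lt hden) (by positivity) hd1

/-- For `α, β > 0`, `MCMPB_n(α,β,θ)` is unimodal: the pmf increases up to some mode
`m` and decreases after it; equivalently, the successive ratio
`P(x+1)/P(x) = θ(n-x)^β/(x+1)^α` is strictly decreasing on `{0,…,n-1}`. -/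
theorem mcmpb_unimodal (n : ℕ) (hn : 0 < n) (α β θ : ℝ)
    (hα : 0 < α) (hβ : 0 < β) (hθ : 0 < θ) :
    (∃ m ≤ n, (∀ x < m, mcmpb n α β θ x ≤ mcmpb n α β θ (x + 1)) ∧
      (∀ x : ℕ, m ≤ x → x < n → mcmpb n α β θ (x + 1) ≤ mcmpb n α β θ x)) ∧
    (∀ x < n, mcmpb n α β θ (x + 1) / mcmpb n α β θ x =
      θ * ((n - x : ℕ) : ℝ) ^ β / ((x : ℝ) + 1) ^ α) ∧
    (∀ x : ℕ, x + 1 < n →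
      θ * ((n - (x + 1) : ℕ) : ℝ) ^ β / (((x : ℝ) + 1) + 1) ^ α <
        θ * ((n - x : ℕ) : ℝ) ^ β / ((x : ℝ) + 1) ^ α) := by
  classical
  set P := mcmpb n α β θ with hP
  set r : ℕ → ℝ := fun x => θ * ((n - x : ℕ) : ℝ) ^ β / ((x : ℝ) + 1) ^ α with hr
  have hPpos : ∀ x, 0 < P x := mcmpb_pos n α β θ hθ
  have hstep : ∀ x, x < n → P (x + 1) = P x * r x := by
    intro x hx
    have h := mcmpb_step n α β θ hθ x hx
    have hx1 : ((x : ℝ) + 1) ^ α ≠ 0 := by positivity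
    show P (x + 1) = P x * (θ * ((n - x : ℕ) : ℝ) ^ β / ((x : ℝ) + 1) ^ α)
    rw [mul_div_assoc', eq_div_iff hx1]
    exact h
  have hratio : ∀ x < n, P (x + 1) / P x = r x := by
    intro x hx
    rw [hstep x hx, mul_comm, mul_div_assoc, div_self (ne_of_gt (hPpos x)), mul_one]
  have hstrict : ∀ x : ℕ, x + 1 < n → r (x + 1) < r x := by
    intro x h
    have := ratio_strict n α β θ hα hβ hθ x h
    simp only [hr, Nat.cast_add, Nat.cast_one]
    convert this using 3 <;> push_cast <;> ring
  refine ⟨?_, hratio, fun x h => ratio_strict n α β θ hα hβ hθ x h⟩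
  by_cases h : ∃ x, x < n ∧ P (x + 1) ≤ P x
  · set m := Nat.find h with hm
    obtain ⟨hmn, hmle⟩ := Nat.find_spec h
    refine ⟨m, le_of_lt hmn, ?_, ?_⟩
    · intro x hxm
      have hxn : x < n := lt_trans hxm hmn
      have := Nat.find_min h hxm
      push_neg at this
      exact le_of_lt (this hxn)
    · -- first: r m ≤ 1
      have hrm : r m ≤ 1 := by
        have := hstep m hmn
        rw [this] at hmle
        exact (mul_le_iff_le_one_right (hPpos m)).mp hmle
      have hmono : ∀ x : ℕ, m ≤ x → x < n → r x ≤ r m := by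
        intro x hmx
        induction x, hmx using Nat.le_induction with
        | base => intro _; exact le_refl _
        | succ y hy ih =>
          intro hyn
          have h1 : r (y + 1) < r y := hstrict y hyn
          have h2 : r y ≤ r m := ih (by omega)
          linarith
      intro x hmx hxn
      rw [hstep x hxn]
      calc P x * r x ≤ P x * 1 := by
            have := le_trans (hmono x hmx hxn) hrm
            exact mul_le_mul_of_nonneg_left this (le_of_lt (hPpos x))
        _ = P x := mul_one _
  · push_neg at h
    refine ⟨n, le_refl n, ?_, ?_⟩
    · intro x hx; exact le_of_lt (h x hx)
    · intro x h1 h2; omega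
end

section
/- Fix a positive integer n, real α, β and 0 < p < 1, and set θ = p/(1−p). For a binary vector (x_1,…,x_n) ∈ {0,1}^n with sum s = x_1 + ⋯ + x_n, define the joint weight w(x_1,…,x_n) = p^s (1−p)^{n−s} / ((s!)^{α−1} ((n−s)!)^{β−1}). Then for every x ∈ {0,…,n}, the sum of the normalized joint weights over all binary vectors with x_1 + ⋯ + x_n = x equals the MCMPB_n(α,β,θ) probability: Σ_{x_1+⋯+x_n = x} w(x_1,…,x_n) / Σ_{(k_1,…,k_n) ∈ {0,1}^n} w(k_1,…,k_n) = θ^x/((x!)^α ((n−x)!)^β C_n(α,β,θ)). That is, the sum X = X_1 + ⋯ + X_n of these dependent Bernoulli variables has the MCMPB_n(α,β,θ) distribution. -/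
/-- The number of successes `s = x₁ + ⋯ + xₙ` of a binary vector. -/
def sVal (n : ℕ) (v : Fin n → Bool) : ℕ := ∑ i, if v i then 1 else 0

/-- Joint weight of a binary vector:
`w(x₁,…,xₙ) = p^s (1-p)^{n-s} / ((s!)^{α-1} ((n-s)!)^{β-1})` where `s = x₁+⋯+xₙ`. -/
noncomputable def jointW (n : ℕ) (α β p : ℝ) (v : Fin n → Bool) : ℝ :=
  p ^ sVal n v * (1 - p) ^ (n - sVal n v) /
    (((sVal n v).factorial : ℝ) ^ (α - 1) * ((n - sVal n v).factorial : ℝ) ^ (β - 1))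

/-- weight as a function of the success count -/
noncomputable def wS (n : ℕ) (α β p : ℝ) (s : ℕ) : ℝ :=
  p ^ s * (1 - p) ^ (n - s) /
    ((s.factorial : ℝ) ^ (α - 1) * ((n - s).factorial : ℝ) ^ (β - 1))

lemma jointW_eq_wS (n : ℕ) (α β p : ℝ) (v : Fin n → Bool) :
    jointW n α β p v = wS n α β p (sVal n v) := rfl

lemma sVal_eq_card (n : ℕ) (v : Fin n → Bool) :
    sVal n v = (Finset.univ.filter (fun i => v i = true)).card := by
  simp [sVal, Finset.sum_boole]

lemma sVal_le (n : ℕ) (v : Fin n → Bool) : sVal n v ≤ n := by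
  rw [sVal_eq_card]
  calc (Finset.univ.filter (fun i => v i = true)).card
      ≤ (Finset.univ : Finset (Fin n)).card := Finset.card_filter_le _ _
    _ = n := by simp

lemma card_sVal_eq (n x : ℕ) :
    (Finset.univ.filter (fun v : Fin n → Bool => sVal n v = x)).card = n.choose x := by
  classical
  have h := Finset.card_powersetCard x (Finset.univ : Finset (Fin n))
  rw [Finset.card_univ, Fintype.card_fin] at h
  rw [← h]
  refine Finset.card_bij' (fun v _ => Finset.univ.filter (fun i => v i = true))
    (fun S _ => fun i => decide (i ∈ S)) ?_ ?_ ?_ ?_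
  · intro v hv
    simp only [Finset.mem_filter, Finset.mem_univ, true_and] at hv
    rw [Finset.mem_powersetCard]
    exact ⟨Finset.filter_subset _ _, by rw [← sVal_eq_card, hv]⟩
  · intro S hS
    rw [Finset.mem_powersetCard] at hS
    simp only [Finset.mem_filter, Finset.mem_univ, true_and]
    rw [sVal_eq_card, ← hS.2]
    congr 1
    ext i
    simp
  · intro v hv
    funext i
    simp
  · intro S hS
    ext i
    simp

lemma key (n : ℕ) (α β p : ℝ) (hp0 : 0 < p) (hp1 : p < 1) (s : ℕ) (hs : s ≤ n) :
    (n.choose s : ℝ) * wS n α β p s =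
      (n.factorial : ℝ) * (1 - p) ^ n *
        ((p / (1 - p)) ^ s /
          ((s.factorial : ℝ) ^ α * ((n - s).factorial : ℝ) ^ β)) := by
  have h1p : (0:ℝ) < 1 - p := by linarith
  have ha : (0:ℝ) < (s.factorial : ℝ) := by positivity
  have hb : (0:ℝ) < ((n - s).factorial : ℝ) := by positivity
  have hfact : (n.choose s : ℝ) * (s.factorial : ℝ) * ((n - s).factorial : ℝ)
      = (n.factorial : ℝ) := by
    exact_mod_cast congrArg (Nat.cast : ℕ → ℝ) (Nat.choose_mul_factorial_mul_factorial hs)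
  have hpow : p ^ s * (1 - p) ^ (n - s) = (p / (1 - p)) ^ s * (1 - p) ^ n := by
    rw [div_pow]
    rw [show (1 - p) ^ n = (1 - p) ^ s * (1 - p) ^ (n - s) by
      rw [← pow_add]; congr 1; omega]
    field_simp
  have hra : (s.factorial : ℝ) ^ (α - 1) = (s.factorial : ℝ) ^ α / (s.factorial : ℝ) :=
    Real.rpow_sub_one ha.ne' α
  have hrb : ((n - s).factorial : ℝ) ^ (β - 1)
      = ((n - s).factorial : ℝ) ^ β / ((n - s).factorial : ℝ) :=
    Real.rpow_sub_one hb.ne' β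
  have hA : (0:ℝ) < (s.factorial : ℝ) ^ α := Real.rpow_pos_of_pos ha α
  have hB : (0:ℝ) < ((n - s).factorial : ℝ) ^ β := Real.rpow_pos_of_pos hb β
  rw [wS, hra, hrb, hpow]
  field_simp
  linear_combination hfact

/-- The sum `X = X₁ + ⋯ + Xₙ` of the dependent Bernoulli variables with joint
pmf proportional to `jointW` is distributed as `MCMPB_n(α,β,θ)` with `θ = p/(1-p)`. -/
theorem mcmpb_as_dependent_bernoulli_sum (n : ℕ) (hn : 0 < n) (α β p : ℝ)
    (hp0 : 0 < p) (hp1 : p < 1) :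
    ∀ x ≤ n,
      (∑ v ∈ Finset.univ.filter (fun v : Fin n → Bool => sVal n v = x),
          jointW n α β p v) /
        (∑ v : Fin n → Bool, jointW n α β p v) =
      mcmpb n α β (p / (1 - p)) x := by
  intro x hx
  classical
  have h1p : (0:ℝ) < 1 - p := by linarith
  -- numerator
  have hnum : (∑ v ∈ Finset.univ.filter (fun v : Fin n → Bool => sVal n v = x),
      jointW n α β p v) = (n.choose x : ℝ) * wS n α β p x := by
    rw [Finset.sum_congr rfl (fun v hv => by
      rw [jointW_eq_wS, (Finset.mem_filter.mp hv).2]),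
      Finset.sum_const, card_sVal_eq, nsmul_eq_mul]
  -- denominator
  have hden : (∑ v : Fin n → Bool, jointW n α β p v)
      = ∑ s ∈ Finset.range (n + 1), (n.choose s : ℝ) * wS n α β p s := by
    rw [← Finset.sum_fiberwise_of_maps_to
      (fun v _ => Finset.mem_range.mpr (Nat.lt_succ_of_le (sVal_le n v)))
      (jointW n α β p)]
    refine Finset.sum_congr rfl (fun s _ => ?_)
    rw [Finset.sum_congr rfl (fun v hv => by
      rw [jointW_eq_wS, (Finset.mem_filter.mp hv).2]),
      Finset.sum_const, card_sVal_eq, nsmul_eq_mul]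
  set θ := p / (1 - p) with hθ
  have hT : ∀ s ∈ Finset.range (n + 1), (n.choose s : ℝ) * wS n α β p s
      = (n.factorial : ℝ) * (1 - p) ^ n *
        (θ ^ s / ((s.factorial : ℝ) ^ α * ((n - s).factorial : ℝ) ^ β)) := by
    intro s hs
    exact key n α β p hp0 hp1 s (Nat.lt_succ_iff.mp (Finset.mem_range.mp hs))
  have hA : ((n.factorial : ℝ) * (1 - p) ^ n) ≠ 0 := by positivity
  rw [hnum, hden, key n α β p hp0 hp1 x hx, Finset.sum_congr rfl hT,
    ← Finset.mul_sum, ← Cn, mul_div_mul_left _ _ hA, mcmpb, div_div]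
end

section
/- Fix a positive integer n and an integer a with 0 < a < n, and let d > 0 be a real number with log(a)/log(n−a+1) < d < log(a+1)/log(n−a). For α > 0 let P_α denote the probability mass function of MCMPB_n(α, dα, 1). Then P_α(a) → 1 as α → ∞; that is, MCMPB_n(α, dα, 1) converges to the distribution degenerate at x = a. -/
open Real Filter Finset

noncomputable def fAux (n : ℕ) (d : ℝ) (k : ℕ) : ℝ :=
  Real.log (k.factorial : ℝ) + d * Real.log (((n - k).factorial : ℝ))

lemma log_nat_nonneg (m : ℕ) : 0 ≤ Real.log (m : ℝ) := by
  rcases Nat.eq_zero_or_pos m with h | h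
  · simp [h]
  · exact Real.log_nonneg (by exact_mod_cast h)

lemma log_nat_mono {m k : ℕ} (h : m ≤ k) : Real.log (m : ℝ) ≤ Real.log (k : ℝ) := by
  rcases Nat.eq_zero_or_pos m with h0 | h0
  · simpa [h0] using log_nat_nonneg k
  · exact Real.log_le_log (by exact_mod_cast h0) (by exact_mod_cast h)

lemma fAux_step (n : ℕ) (d : ℝ) (k : ℕ) (hkn : k < n) :
    fAux n d (k + 1) - fAux n d k
      = Real.log ((k + 1 : ℕ) : ℝ) - d * Real.log (((n - k : ℕ)) : ℝ) := by
  have h1 : (n - k : ℕ) = (n - (k + 1)) + 1 := by omega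
  have h2 : ((n - k).factorial : ℝ) = ((n - k : ℕ) : ℝ) * ((n - (k+1)).factorial : ℝ) := by
    rw [h1, Nat.factorial_succ]
    push_cast
    ring
  have h3 : ((k+1).factorial : ℝ) = ((k+1 : ℕ) : ℝ) * (k.factorial : ℝ) := by
    rw [Nat.factorial_succ]; push_cast; ring
  unfold fAux
  rw [h2, h3, Real.log_mul (by positivity) (by exact_mod_cast k.factorial_ne_zero),
    Real.log_mul (by exact_mod_cast (by omega : n - k ≠ 0)) (by exact_mod_cast (n - (k+1)).factorial_ne_zero)]
  ring

/-- Degenerate limit: for `0 < a < n` and `d > 0` with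
`log a / log(n-a+1) < d < log(a+1) / log(n-a)`, the pmf of `MCMPB_n(α, dα, 1)` at
`a` tends to `1` as `α → ∞`, i.e. the distribution degenerates at `x = a`. -/
theorem mcmpb_degenerate_limit (n a : ℕ) (ha0 : 0 < a) (han : a < n) (d : ℝ)
    (hd : 0 < d)
    (hd1 : Real.log (a : ℝ) / Real.log ((n : ℝ) - (a : ℝ) + 1) < d)
    (hd2 : d < Real.log ((a : ℝ) + 1) / Real.log ((n : ℝ) - (a : ℝ))) :
    Filter.Tendsto (fun α : ℝ => mcmpb n α (d * α) 1 a) Filter.atTop (nhds 1) := by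
  by_cases hn1 : n = a + 1
  · exfalso
    subst hn1
    have : ((a:ℝ) + 1) - (a:ℝ) = 1 := by ring
    rw [show ((a+1 : ℕ) : ℝ) = (a:ℝ) + 1 by push_cast; ring, this, Real.log_one, div_zero] at hd2
    exact absurd hd2 (not_lt.mpr hd.le)
  have hna2 : a + 2 ≤ n := by omega
  -- key inequalities
  have hpos1 : (0:ℝ) < Real.log ((n : ℝ) - (a : ℝ) + 1) := by
    apply Real.log_pos
    have : (a:ℝ) + 1 ≤ (n:ℝ) := by exact_mod_cast han
    linarith
  have hpos2 : (0:ℝ) < Real.log ((n : ℝ) - (a : ℝ)) := by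
    apply Real.log_pos
    have : (a:ℝ) + 2 ≤ (n:ℝ) := by exact_mod_cast hna2
    linarith
  have key1 : Real.log (a : ℝ) < d * Real.log ((n : ℝ) - (a : ℝ) + 1) :=
    (div_lt_iff₀ hpos1).mp hd1
  have key2 : d * Real.log ((n : ℝ) - (a : ℝ)) < Real.log ((a : ℝ) + 1) :=
    (lt_div_iff₀ hpos2).mp hd2
  have hcastna : ((n - a : ℕ) : ℝ) = (n : ℝ) - (a : ℝ) := by
    rw [Nat.cast_sub han.le]
  -- step up: a ≤ k < n → f k < f (k+1)
  have step_up : ∀ k, a ≤ k → k < n → fAux n d k < fAux n d (k + 1) := by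
    intro k hak hkn
    have h := fAux_step n d k hkn
    have h1 : Real.log (((n - k : ℕ)) : ℝ) ≤ Real.log (((n - a : ℕ)) : ℝ) :=
      log_nat_mono (by omega)
    have h2 : Real.log ((a + 1 : ℕ) : ℝ) ≤ Real.log ((k + 1 : ℕ) : ℝ) :=
      log_nat_mono (by omega)
    have h3 : d * Real.log (((n - k : ℕ)) : ℝ) ≤ d * Real.log (((n - a : ℕ)) : ℝ) :=
      mul_le_mul_of_nonneg_left h1 hd.le
    rw [hcastna] at h3
    have h4 : ((a + 1 : ℕ) : ℝ) = (a : ℝ) + 1 := by push_cast; ring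
    rw [h4] at h2
    nlinarith [h, h2, h3, key2]
  -- step down: k < a → f (k+1) < f k
  have step_down : ∀ k, k < a → fAux n d (k + 1) < fAux n d k := by
    intro k hka
    have h := fAux_step n d k (by omega)
    have h1 : Real.log (((n - a + 1 : ℕ)) : ℝ) ≤ Real.log (((n - k : ℕ)) : ℝ) :=
      log_nat_mono (by omega)
    have h2 : Real.log ((k + 1 : ℕ) : ℝ) ≤ Real.log ((a : ℕ) : ℝ) :=
      log_nat_mono (by omega)
    have h3 : d * Real.log (((n - a + 1 : ℕ)) : ℝ) ≤ d * Real.log (((n - k : ℕ)) : ℝ) :=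
      mul_le_mul_of_nonneg_left h1 hd.le
    have h4 : ((n - a + 1 : ℕ) : ℝ) = (n : ℝ) - (a : ℝ) + 1 := by
      push_cast [Nat.cast_sub han.le]; ring
    rw [h4] at h3
    nlinarith [h, h2, h3, key1]
  -- strict minimum at a
  have up : ∀ j : ℕ, a + j ≤ n → 0 < j → fAux n d a < fAux n d (a + j) := by
    intro j
    induction j with
    | zero => intro _ h; omega
    | succ m ih =>
      intro hle _
      rcases Nat.eq_zero_or_pos m with hm | hm
      · subst hm; simpa using step_up a le_rfl (by omega)
      · have := ih (by omega) hm
        have := step_up (a + m) (by omega) (by omega)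
        calc fAux n d a < fAux n d (a + m) := ih (by omega) hm
          _ < fAux n d (a + m + 1) := step_up (a + m) (by omega) (by omega)
          _ = fAux n d (a + (m + 1)) := by ring_nf
  have down : ∀ j : ℕ, j ≤ a → 0 < j → fAux n d a < fAux n d (a - j) := by
    intro j
    induction j with
    | zero => intro _ h; omega
    | succ m ih =>
      intro hle _
      have hstep : fAux n d (a - m) < fAux n d (a - (m + 1)) := by
        have h1 : a - (m + 1) + 1 = a - m := by omega
        have := step_down (a - (m+1)) (by omega)
        rwa [h1] at this
      rcases Nat.eq_zero_or_pos m with hm | hm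
      · subst hm; simpa using hstep
      · exact lt_trans (ih (by omega) hm) hstep
  have hmin : ∀ k, k ≤ n → k ≠ a → fAux n d a < fAux n d k := by
    intro k hk hka
    rcases lt_or_gt_of_ne hka with h | h
    · have := down (a - k) (by omega) (by omega)
      rwa [show a - (a - k) = k by omega] at this
    · have := up (k - a) (by omega) (by omega)
      rwa [show a + (k - a) = k by omega] at this
  -- rewrite the pmf as 1 / sum of exponentials
  have key : ∀ α : ℝ, mcmpb n α (d * α) 1 a
      = 1 / ∑ k ∈ Finset.range (n + 1), Real.exp (α * (fAux n d a - fAux n d k)) := by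
    intro α
    unfold mcmpb Cn
    rw [one_pow]
    congr 1
    rw [Finset.mul_sum]
    refine Finset.sum_congr rfl (fun k _ => ?_)
    have pfa : (0:ℝ) < (a.factorial : ℝ) := by exact_mod_cast a.factorial_pos
    have pfna : (0:ℝ) < ((n - a).factorial : ℝ) := by exact_mod_cast (n - a).factorial_pos
    have pfk : (0:ℝ) < (k.factorial : ℝ) := by exact_mod_cast k.factorial_pos
    have pfnk : (0:ℝ) < ((n - k).factorial : ℝ) := by exact_mod_cast (n - k).factorial_pos
    rw [one_pow, Real.rpow_def_of_pos pfa, Real.rpow_def_of_pos pfna,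
      Real.rpow_def_of_pos pfk, Real.rpow_def_of_pos pfnk,
      ← Real.exp_add, ← Real.exp_add, one_div, ← Real.exp_neg, ← Real.exp_add,
      Real.exp_eq_exp]
    simp only [fAux]
    ring
  -- limit of the sum of exponentials
  have hS : Filter.Tendsto
      (fun α : ℝ => ∑ k ∈ Finset.range (n + 1), Real.exp (α * (fAux n d a - fAux n d k)))
      Filter.atTop (nhds 1) := by
    have h1 : (1:ℝ) = ∑ k ∈ Finset.range (n + 1), (if k = a then (1:ℝ) else 0) := by
      rw [Finset.sum_ite_eq' (Finset.range (n + 1)) a (fun _ => (1:ℝ))]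
      simp [Nat.lt_succ_of_lt han]
    rw [h1]
    refine tendsto_finset_sum _ (fun k hk => ?_)
    by_cases hka : k = a
    · subst hka
      simp only [sub_self, mul_zero, Real.exp_zero, if_pos rfl]
      exact tendsto_const_nhds
    · rw [if_neg hka]
      have hc : fAux n d a - fAux n d k < 0 := by
        have := hmin k (by simpa [Nat.lt_succ_iff] using Finset.mem_range.mp hk) hka
        linarith
      have hlin : Filter.Tendsto (fun α : ℝ => α * (fAux n d a - fAux n d k))
          Filter.atTop Filter.atBot := tendsto_id.atTop_mul_const_of_neg hc
      exact Real.tendsto_exp_atBot.comp hlin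
  have hfin : Filter.Tendsto
      (fun α : ℝ => 1 /
        ∑ k ∈ Finset.range (n + 1), Real.exp (α * (fAux n d a - fAux n d k)))
      Filter.atTop (nhds 1) := by
    have := Filter.Tendsto.div (tendsto_const_nhds : Filter.Tendsto (fun _ : ℝ => (1:ℝ)) Filter.atTop (nhds 1)) hS one_ne_zero
    simpa [Pi.div_def] using this
  exact hfin.congr (fun α => (key α).symm)
end

section
/- Fix a positive integer n and an integer a with 0 < a < n − 1, and set d = log(a+1)/log(n−a) (assume n − a ≥ 2 so d is well defined and positive). For α > 0 let P_α denote the probability mass function of MCMPB_n(α, dα, 1). Then as α → ∞, P_α(a) → 1/2 and P_α(a+1) → 1/2; that is, MCMPB_n(α, dα, 1) converges to the uniform distribution on the two points {a, a+1}. -/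
open Filter Real Finset in
lemma mcmpb_aux (n a : ℕ) (ha0 : 0 < a) (han : a < n - 1) (hna : 2 ≤ n - a)
    (x : ℕ) (hx : x = a ∨ x = a + 1) :
    Filter.Tendsto
      (fun α : ℝ =>
        mcmpb n α (Real.log ((a : ℝ) + 1) / Real.log ((n : ℝ) - (a : ℝ)) * α) 1 x)
      Filter.atTop (nhds (1 / 2)) := by
  have hn2 : a + 2 ≤ n := by omega
  set d : ℝ := Real.log ((a : ℝ) + 1) / Real.log ((n : ℝ) - (a : ℝ)) with hd
  set w : ℕ → ℝ := fun k =>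
    Real.log (k.factorial : ℝ) + d * Real.log ((n - k).factorial : ℝ) with hw
  have hcast : (n : ℝ) - (a : ℝ) = ((n - a : ℕ) : ℝ) :=
    (Nat.cast_sub (by omega)).symm
  have hlogna : 0 < Real.log ((n : ℝ) - (a : ℝ)) := by
    rw [hcast]
    exact Real.log_pos (by exact_mod_cast (by omega : 1 < n - a))
  have hloga : 0 < Real.log ((a : ℝ) + 1) := by
    refine Real.log_pos ?_
    have : (1 : ℝ) ≤ (a : ℝ) := by exact_mod_cast ha0
    linarith
  have hdpos : 0 < d := div_pos hloga hlogna
  have hda : d * Real.log ((n : ℝ) - (a : ℝ)) = Real.log ((a : ℝ) + 1) :=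
    div_mul_cancel₀ _ (ne_of_gt hlogna)
  -- step formula
  have hstep : ∀ k : ℕ, k + 1 ≤ n →
      w k - w (k + 1) = d * Real.log ((n - k : ℕ) : ℝ) - Real.log ((k : ℝ) + 1) := by
    intro k hk
    have e1 : (((k + 1).factorial : ℕ) : ℝ) = ((k : ℝ) + 1) * (k.factorial : ℝ) := by
      rw [Nat.factorial_succ]; push_cast; ring
    have e2 : (((n - k).factorial : ℕ) : ℝ)
        = ((n - k : ℕ) : ℝ) * ((n - (k + 1)).factorial : ℝ) := by
      have h2 : n - k = (n - (k + 1)) + 1 := by omega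
      rw [h2, Nat.factorial_succ]; push_cast; ring
    have hnk0 : ((n - k : ℕ) : ℝ) ≠ 0 :=
      Nat.cast_ne_zero.mpr (by omega)
    simp only [hw]
    rw [e1, e2, Real.log_mul hnk0 (by positivity),
      Real.log_mul (by positivity) (by positivity)]
    ring
  -- equality of the two minimal values
  have weq : w a = w (a + 1) := by
    have hs := hstep a (by omega)
    rw [← hcast, hda] at hs
    linarith
  -- strict decrease before a
  have hdec : ∀ k, k < a → w (k + 1) < w k := by
    intro k hk
    have hs := hstep k (by omega)
    have l1 : Real.log ((k : ℝ) + 1) < Real.log ((a : ℝ) + 1) := by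
      refine Real.log_lt_log (by positivity) ?_
      have : (k : ℝ) < (a : ℝ) := by exact_mod_cast hk
      linarith
    have l2 : Real.log ((n : ℝ) - (a : ℝ)) < Real.log ((n - k : ℕ) : ℝ) := by
      rw [hcast]
      refine Real.log_lt_log (by exact_mod_cast (by omega : 0 < n - a)) ?_
      exact_mod_cast (by omega : n - a < n - k)
    nlinarith
  -- strict increase after a+1
  have hinc : ∀ k, a < k → k < n → w k < w (k + 1) := by
    intro k hk1 hk2
    have hs := hstep k (by omega)
    have l1 : Real.log ((a : ℝ) + 1) < Real.log ((k : ℝ) + 1) := by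
      refine Real.log_lt_log (by positivity) ?_
      have : (a : ℝ) < (k : ℝ) := by exact_mod_cast hk1
      linarith
    have l2 : Real.log ((n - k : ℕ) : ℝ) < Real.log ((n : ℝ) - (a : ℝ)) := by
      rw [hcast]
      refine Real.log_lt_log (by exact_mod_cast (by omega : 0 < n - k)) ?_
      exact_mod_cast (by omega : n - k < n - a)
    nlinarith
  have hlow : ∀ m k, k + m = a → w a ≤ w k := by
    intro m
    induction m with
    | zero =>
      intro k hk
      have hke : k = a := by omega
      exact le_of_eq (congrArg w hke.symm)
    | succ m ih =>
      intro k hk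
      have h1 := hdec k (by omega)
      have h2 := ih (k + 1) (by omega)
      linarith
  have hhigh : ∀ m, a + 1 + m ≤ n → w (a + 1) ≤ w (a + 1 + m) := by
    intro m
    induction m with
    | zero => intro _; exact le_refl _
    | succ m ih =>
      intro h
      have h1 := hinc (a + 1 + m) (by omega) (by omega)
      have h2 := ih (by omega)
      have e : a + 1 + (m + 1) = (a + 1 + m) + 1 := by omega
      rw [e]
      linarith
  -- strict minimum off {a, a+1}
  have hmin : ∀ k, k ≤ n → k ≠ a → k ≠ a + 1 → w a < w k := by
    intro k hk h1 h2
    rcases lt_or_gt_of_ne h1 with hlt | hgt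
    · have hd1 := hdec k hlt
      have hd2 := hlow (a - (k + 1)) (k + 1) (by omega)
      linarith
    · have hgt1 : a + 1 < k := by omega
      have hi1 := hinc (k - 1) (by omega) (by omega)
      have hi2 := hhigh (k - 1 - (a + 1)) (by omega)
      have e1 : a + 1 + (k - 1 - (a + 1)) = k - 1 := by omega
      have e2 : k - 1 + 1 = k := by omega
      rw [e1] at hi2
      rw [e2] at hi1
      linarith
  have wx : w x = w a := by
    rcases hx with rfl | rfl
    · rfl
    · exact weq.symm
  -- algebraic identity for the pmf
  have hid : ∀ α : ℝ, mcmpb n α (d * α) 1 x =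
      1 / ∑ k ∈ Finset.range (n + 1), Real.exp (α * (w x - w k)) := by
    intro α
    have hA : ∀ k : ℕ, (k.factorial : ℝ) ^ α * ((n - k).factorial : ℝ) ^ (d * α)
        = Real.exp (α * w k) := by
      intro k
      rw [Real.rpow_def_of_pos (by positivity), Real.rpow_def_of_pos (by positivity),
        ← Real.exp_add]
      congr 1
      simp only [hw]; ring
    have key : (x.factorial : ℝ) ^ α * ((n - x).factorial : ℝ) ^ (d * α) *
        (∑ k ∈ Finset.range (n + 1),
          (1 : ℝ) / ((k.factorial : ℝ) ^ α * ((n - k).factorial : ℝ) ^ (d * α)))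
        = ∑ k ∈ Finset.range (n + 1), Real.exp (α * (w x - w k)) := by
      rw [Finset.mul_sum]
      refine Finset.sum_congr rfl fun k _ => ?_
      rw [hA, hA, mul_one_div, ← Real.exp_sub, ← mul_sub]
    simp only [mcmpb, Cn, one_pow]
    rw [key]
  -- limit of the sum
  have hS : Filter.Tendsto
      (fun α : ℝ => ∑ k ∈ Finset.range (n + 1), Real.exp (α * (w x - w k)))
      Filter.atTop (nhds 2) := by
    have hterm : ∀ k ∈ Finset.range (n + 1),
        Filter.Tendsto (fun α : ℝ => Real.exp (α * (w x - w k))) Filter.atTop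
          (nhds (if k = a ∨ k = a + 1 then (1 : ℝ) else 0)) := by
      intro k hk
      by_cases hcase : k = a ∨ k = a + 1
      · have h0 : w x - w k = 0 := by
          rcases hcase with rfl | rfl
          · rw [wx]; ring
          · rw [wx, weq]; ring
        simp only [h0, mul_zero, Real.exp_zero, if_pos hcase]
        exact tendsto_const_nhds
      · push_neg at hcase
        have hneg : w x - w k < 0 := by
          have := hmin k (by simpa [Nat.lt_succ_iff] using Finset.mem_range.mp hk)
            hcase.1 hcase.2
          rw [wx]; linarith
        rw [if_neg (by push_neg; exact hcase)]
        exact Real.tendsto_exp_atBot.comp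
          (Filter.Tendsto.atTop_mul_const_of_neg hneg Filter.tendsto_id)
    have hsum := tendsto_finset_sum (Finset.range (n + 1)) hterm
    have h2 : (∑ k ∈ Finset.range (n + 1),
        (if k = a ∨ k = a + 1 then (1 : ℝ) else 0)) = 2 := by
      rw [Finset.sum_boole]
      have hfe : Finset.filter (fun k => k = a ∨ k = a + 1) (Finset.range (n + 1))
          = {a, a + 1} := by
        ext k
        simp only [Finset.mem_filter, Finset.mem_range, Finset.mem_insert,
          Finset.mem_singleton]
        constructor
        · tauto
        · intro h; exact ⟨by omega, h⟩
      rw [hfe]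
      rw [Finset.card_insert_of_notMem (by simp), Finset.card_singleton]
      norm_num
    rwa [h2] at hsum
  have hfinal : Filter.Tendsto
      (fun α : ℝ => 1 / ∑ k ∈ Finset.range (n + 1), Real.exp (α * (w x - w k)))
      Filter.atTop (nhds (1 / 2)) :=
    Filter.Tendsto.div tendsto_const_nhds hS two_ne_zero
  exact hfinal.congr fun α => (hid α).symm

/-- Two-point uniform limit: for `0 < a < n - 1` with `n - a ≥ 2` and
`d = log(a+1)/log(n-a)`, the pmf of `MCMPB_n(α, dα, 1)` converges, as `α → ∞`, to
the uniform distribution on the two points `{a, a+1}`. -/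
theorem mcmpb_two_point_uniform_limit (n a : ℕ) (ha0 : 0 < a) (han : a < n - 1)
    (hna : 2 ≤ n - a) :
    Filter.Tendsto
      (fun α : ℝ =>
        mcmpb n α (Real.log ((a : ℝ) + 1) / Real.log ((n : ℝ) - (a : ℝ)) * α) 1 a)
      Filter.atTop (nhds (1 / 2)) ∧
    Filter.Tendsto
      (fun α : ℝ =>
        mcmpb n α (Real.log ((a : ℝ) + 1) / Real.log ((n : ℝ) - (a : ℝ)) * α) 1 (a + 1))
      Filter.atTop (nhds (1 / 2)) :=
  ⟨mcmpb_aux n a ha0 han hna a (Or.inl rfl),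
   mcmpb_aux n a ha0 han hna (a + 1) (Or.inr rfl)⟩
end

section
/- Fix a positive integer n and real α, β. For θ > 0 let μ'_k(θ) = Σ_{x=0}^n x^k · θ^x/((x!)^α ((n−x)!)^β C_n(α,β,θ)) denote the k-th raw moment of MCMPB_n(α,β,θ). Then for every k ≥ 1 the raw moments satisfy the recursion μ'_{k+1}(θ) = θ · dμ'_k/dθ (θ) + μ'_1(θ) · μ'_k(θ), where dμ'_k/dθ denotes the derivative of μ'_k with respect to θ (each μ'_k is differentiable on (0,∞)). -/
/-- `k`-th raw moment `μ'_k(θ)` of `MCMPB_n(α,β,θ)` as a function of `θ`. -/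
noncomputable def rawMoment (n : ℕ) (α β : ℝ) (k : ℕ) (θ : ℝ) : ℝ :=
  ∑ x ∈ Finset.range (n + 1), (x : ℝ) ^ k * mcmpb n α β θ x

/-- Auxiliary: `S_k(θ) = ∑ x^k θ^x / ((x!)^α ((n-x)!)^β)`. -/
noncomputable def Sfun (n : ℕ) (α β : ℝ) (k : ℕ) (θ : ℝ) : ℝ :=
  ∑ x ∈ Finset.range (n + 1),
    (x : ℝ) ^ k * θ ^ x / ((x.factorial : ℝ) ^ α * ((n - x).factorial : ℝ) ^ β)

lemma Cn_eq_Sfun (n : ℕ) (α β θ : ℝ) : Cn n α β θ = Sfun n α β 0 θ := by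
  simp [Cn, Sfun]

lemma Sfun_zero_pos (n : ℕ) (α β : ℝ) {θ : ℝ} (hθ : 0 < θ) : 0 < Sfun n α β 0 θ := by
  apply Finset.sum_pos _ Finset.nonempty_range_add_one
  intro x _
  have h1 : (0:ℝ) < (x.factorial : ℝ) ^ α := by
    have := x.factorial_pos
    positivity
  have h2 : (0:ℝ) < ((n - x).factorial : ℝ) ^ β := by
    have := (n - x).factorial_pos
    positivity
  have h3 : (x:ℝ) ^ 0 * θ ^ x = θ ^ x := by simp
  rw [h3]
  positivity

lemma rawMoment_eq_Sfun (n : ℕ) (α β : ℝ) (k : ℕ) :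
    rawMoment n α β k = fun θ => Sfun n α β k θ / Sfun n α β 0 θ := by
  funext θ
  rw [rawMoment, Sfun, ← Cn_eq_Sfun, Finset.sum_div]
  apply Finset.sum_congr rfl
  intro x _
  rw [mcmpb]
  ring

lemma Sfun_hasDerivAt (n : ℕ) (α β : ℝ) (k : ℕ) {θ : ℝ} (hθ : θ ≠ 0) :
    HasDerivAt (Sfun n α β k) (Sfun n α β (k + 1) θ / θ) θ := by
  have h : HasDerivAt (fun t : ℝ => ∑ x ∈ Finset.range (n + 1),
      (x : ℝ) ^ k * t ^ x / ((x.factorial : ℝ) ^ α * ((n - x).factorial : ℝ) ^ β))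
      (∑ x ∈ Finset.range (n + 1),
        (x : ℝ) ^ k * ((x : ℝ) * θ ^ (x - 1)) /
          ((x.factorial : ℝ) ^ α * ((n - x).factorial : ℝ) ^ β)) θ := by
    apply HasDerivAt.fun_sum
    intro x _
    exact ((hasDerivAt_pow x θ).const_mul ((x : ℝ) ^ k)).div_const _
  have heq : Sfun n α β (k + 1) θ / θ =
      ∑ x ∈ Finset.range (n + 1),
        (x : ℝ) ^ k * ((x : ℝ) * θ ^ (x - 1)) /
          ((x.factorial : ℝ) ^ α * ((n - x).factorial : ℝ) ^ β) := by
    rw [div_eq_iff hθ, Sfun, Finset.sum_mul]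
    apply Finset.sum_congr rfl
    intro x _
    cases x with
    | zero => simp
    | succ m =>
      simp only [Nat.add_sub_cancel]
      push_cast
      ring
  rw [heq]
  exact h

/-- Power-series-distribution recursion for the raw moments of `MCMPB_n(α,β,θ)`:
each `μ'_k` is differentiable on `(0,∞)` and
`μ'_{k+1}(θ) = θ (μ'_k)'(θ) + μ'_1(θ) μ'_k(θ)` for `k ≥ 1`. -/
theorem mcmpb_raw_moment_recursion (n : ℕ) (hn : 0 < n) (α β : ℝ) :
    (∀ k : ℕ, ∀ θ : ℝ, 0 < θ → DifferentiableAt ℝ (rawMoment n α β k) θ) ∧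
    (∀ k : ℕ, 1 ≤ k → ∀ θ : ℝ, 0 < θ →
      rawMoment n α β (k + 1) θ =
        θ * deriv (rawMoment n α β k) θ + rawMoment n α β 1 θ * rawMoment n α β k θ) := by
  have hD : ∀ (k : ℕ) (θ : ℝ), 0 < θ →
      HasDerivAt (rawMoment n α β k)
        ((Sfun n α β (k + 1) θ / θ * Sfun n α β 0 θ -
          Sfun n α β k θ * (Sfun n α β (0 + 1) θ / θ)) / (Sfun n α β 0 θ) ^ 2) θ := by
    intro k θ hθ
    rw [rawMoment_eq_Sfun]
    exact (Sfun_hasDerivAt n α β k hθ.ne').div (Sfun_hasDerivAt n α β 0 hθ.ne')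
      (Sfun_zero_pos n α β hθ).ne'
  constructor
  · intro k θ hθ
    exact (hD k θ hθ).differentiableAt
  · intro k _ θ hθ
    have hC := (Sfun_zero_pos n α β hθ).ne'
    rw [(hD k θ hθ).deriv]
    simp only [rawMoment_eq_Sfun]
    field_simp
    ring
end
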